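/- The hypergraph (Q, S) has a 2-colouring if and only if the graph G = G(Q,S) contains P_5 as a contraction. -/

import Mathlib

/-
A 2-colouring (Q₁, Q₂) gives the P₅-witness structure with bags {v}, {q*, u₁, u₂},
{S_j, q^i_j, q_i ∈ Q₁}, {S_j', q_i ∈ Q₂}, {w}. Conversely, view a P₅-witness structure as a map
f to {0, …, 4} with connected fibres that changes by at most one along edges. Comparing the end
bags with the path q* – u₁ – S_n – S_n' – w shows that, after possibly reversing the path, either
f v = 0 and w or some q_i lies in bag 4, or f q* = 0 and f w = 4. In the first case with f w = 4
the values of u₁, u₂, S_j, S_j' are forced to be 1, 2, 3, and the connectivity of bags 2 and 3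
makes {q_i in bag 2}, {q_i in bag 3} a 2-colouring; the two other cases contradict the
connectivity of bag 1.
-/

/-- `W` is an `H`-witness structure of `G`: a family of pairwise disjoint nonempty
connected subsets of `V(G)` covering `V(G)` such that distinct `h₁ h₂` are adjacent in `H`
iff there is an edge of `G` between `W h₁` and `W h₂`. -/
def IsWitnessStructure {V U : Type*} (G : SimpleGraph V) (H : SimpleGraph U)
    (W : U → Set V) : Prop :=
  (∀ h, (W h).Nonempty) ∧
  (∀ h₁ h₂, h₁ ≠ h₂ → Disjoint (W h₁) (W h₂)) ∧
  (⋃ h, W h) = Set.univ ∧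
  (∀ h, (G.induce (W h)).Connected) ∧
  (∀ h₁ h₂, h₁ ≠ h₂ → ((∃ a ∈ W h₁, ∃ b ∈ W h₂, G.Adj a b) ↔ H.Adj h₁ h₂))

/-- `G` contains `H` as a contraction. -/
def ContainsAsContraction {V U : Type*} (G : SimpleGraph V) (H : SimpleGraph U) : Prop :=
  ∃ W : U → Set V, IsWitnessStructure G H W

/-- Raw vertex names for the graph `G(Q,S)`: elements `q_i`, hyperedges `S_j`,
copies `S_j'`, subdivision vertices `q^i_j`, and special vertices `q*`, `u₁`, `u₂`, `v`, `w`. -/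
inductive HVertex (m n : ℕ) : Type
  | elt : Fin m → HVertex m n
  | hyp : Fin n → HVertex m n
  | copy : Fin n → HVertex m n
  | sub : Fin m → Fin n → HVertex m n
  | qstar : HVertex m n
  | u1 : HVertex m n
  | u2 : HVertex m n
  | v : HVertex m n
  | w : HVertex m n

/-- A raw vertex name is an actual vertex of `G(Q,S)`: the subdivision vertex `q^i_j`
exists only when `q_i ∈ S_j`. -/
def HVertex.OK {m n : ℕ} (S : Fin n → Set (Fin m)) : HVertex m n → Prop
  | .sub i j => i ∈ S j
  | _ => True

/-- The vertex set of `G(Q,S)`. -/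
def GVertex {m n : ℕ} (S : Fin n → Set (Fin m)) : Type := {x : HVertex m n // x.OK S}

/-- The (asymmetrically listed) edges of `G(Q,S)`:
`q^i_j q_i`, `q^i_j S_j`, `q_i S_j'` (for `q_i ∈ S_j`), `S_j S_k'` (all `j,k`),
`q* u₁`, `q* u₂`, `q* q^i_j`, `u₁ S_j`, `u₂ S_j`, `u₁ v`, `u₂ v`, `w S_j'`. -/
def baseAdj {m n : ℕ} (S : Fin n → Set (Fin m)) : HVertex m n → HVertex m n → Prop
  | .sub i _, .elt i' => i = i'
  | .sub _ j, .hyp j' => j = j'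
  | .elt i, .copy j => i ∈ S j
  | .hyp _, .copy _ => True
  | .qstar, .u1 => True
  | .qstar, .u2 => True
  | .qstar, .sub _ _ => True
  | .u1, .hyp _ => True
  | .u2, .hyp _ => True
  | .u1, .v => True
  | .u2, .v => True
  | .w, .copy _ => True
  | _, _ => False

/-- The graph `G = G(Q,S)`. -/
def GQS {m n : ℕ} (S : Fin n → Set (Fin m)) : SimpleGraph (GVertex S) :=
  SimpleGraph.fromRel (fun a b => baseAdj S a.1 b.1)

/-- `(Q₁, Q₂)` is a 2-colouring of the hypergraph `(Q, S)`: a partition of `Q` such that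
every hyperedge meets both parts. -/
def IsTwoColouring {m n : ℕ} (S : Fin n → Set (Fin m)) (Q₁ Q₂ : Set (Fin m)) : Prop :=
  Q₁ ∪ Q₂ = Set.univ ∧ Disjoint Q₁ Q₂ ∧ ∀ j, (Q₁ ∩ S j).Nonempty ∧ (Q₂ ∩ S j).Nonempty

open SimpleGraph

section Contraction

variable {V U U' : Type*} {G : SimpleGraph V} {H : SimpleGraph U} {H' : SimpleGraph U'}
  {f : V → U}

structure IsContractionMap (G : SimpleGraph V) (H : SimpleGraph U) (f : V → U) : Prop where
  surjective : Function.Surjective f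
  connected_fiber : ∀ u, (G.induce (f ⁻¹' {u})).Connected
  exists_adj_iff : ∀ u₁ u₂, u₁ ≠ u₂ → ((∃ a b, f a = u₁ ∧ f b = u₂ ∧ G.Adj a b) ↔ H.Adj u₁ u₂)

theorem containsAsContraction_iff_exists_isContractionMap :
    ContainsAsContraction G H ↔ ∃ f, IsContractionMap G H f := by
  constructor
  · rintro ⟨W, hne, hdisj, hcov, hconn, hadj⟩
    have hmem : ∀ x, ∃ u, x ∈ W u := fun x => Set.mem_iUnion.1 (hcov ▸ Set.mem_univ x)
    choose f hf using hmem
    have hfiber : ∀ u, f ⁻¹' {u} = W u := fun u => Set.ext fun x =>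
      ⟨fun h => h ▸ hf x,
        fun h => by_contra fun hne => Set.disjoint_left.1 (hdisj _ _ hne) (hf x) h⟩
    refine ⟨f, ⟨fun u => ?_, fun u => hfiber u ▸ hconn u, fun u₁ u₂ hu => ?_⟩⟩
    · obtain ⟨x, hx⟩ := hne u
      rw [← hfiber u] at hx
      exact ⟨x, hx⟩
    · rw [← hadj u₁ u₂ hu, ← hfiber, ← hfiber]
      simp
  · rintro ⟨f, hf⟩
    refine ⟨fun u => f ⁻¹' {u}, fun u => hf.surjective u, ?_, ?_, hf.connected_fiber, ?_⟩
    · exact fun u₁ u₂ hu => Set.disjoint_left.2 fun x h₁ h₂ => hu (h₁.symm.trans h₂)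
    · exact Set.eq_univ_of_forall fun x => Set.mem_iUnion.2 ⟨f x, rfl⟩
    · intro u₁ u₂ hu
      rw [← hf.exists_adj_iff u₁ u₂ hu]
      simp

theorem IsContractionMap.comp_iso (hf : IsContractionMap G H f) (φ : H ≃g H') :
    IsContractionMap G H' (φ ∘ f) := by
  have hfiber : ∀ u, φ ∘ f ⁻¹' {u} = f ⁻¹' {φ.symm u} := fun u => by
    ext x; simp [← φ.eq_symm_apply]
  refine ⟨φ.surjective.comp hf.surjective, fun u => hfiber u ▸ hf.connected_fiber _,
    fun u₁ u₂ hu => ?_⟩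
  rw [← φ.symm.map_adj_iff, ← hf.exists_adj_iff _ _ (φ.symm.injective.ne hu)]
  simp [← φ.eq_symm_apply]

theorem IsContractionMap.val_le_add_one {k : ℕ} {f : V → Fin k}
    (hf : IsContractionMap G (pathGraph k) f) {x y : V} (h : G.Adj x y) :
    (f x : ℕ) ≤ f y + 1 := by
  by_cases hxy : f x = f y
  · rw [hxy]; omega
  · have := (hf.exists_adj_iff _ _ hxy).1 ⟨x, y, rfl, rfl, h⟩
    rw [pathGraph_adj] at this
    omega

def pathGraphRevIso (k : ℕ) : pathGraph k ≃g pathGraph k where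
  toEquiv := Fin.revPerm
  map_rel_iff' := by
    intro a b
    simp only [Fin.revPerm_apply, pathGraph_adj, Fin.val_rev]
    omega

theorem pathGraphRevIso_apply {k : ℕ} (i : Fin k) : pathGraphRevIso k i = i.rev := rfl

theorem exists_adj_of_connected_induce {s t : Set V} (hs : (G.induce s).Connected)
    {x y : V} (hx : x ∈ s) (hy : y ∈ s) (hxt : x ∈ t) (hyt : y ∉ t) :
    ∃ a ∈ s, ∃ b ∈ s, a ∈ t ∧ b ∉ t ∧ G.Adj a b := by
  obtain ⟨p⟩ := hs.preconnected ⟨x, hx⟩ ⟨y, hy⟩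
  obtain ⟨d, -, hd₁, hd₂⟩ := p.exists_boundary_dart (Subtype.val ⁻¹' t) hxt hyt
  exact ⟨d.fst, d.fst.2, d.snd, d.snd.2, hd₁, hd₂, d.adj⟩

theorem exists_adj_of_connected_induce_of_ne {s : Set V} (hs : (G.induce s).Connected)
    {x y : V} (hx : x ∈ s) (hy : y ∈ s) (hxy : x ≠ y) : ∃ z ∈ s, G.Adj x z := by
  obtain ⟨a, -, z, hz, rfl, -, haz⟩ :=
    exists_adj_of_connected_induce (t := {x}) hs hx hy rfl (Set.mem_singleton_iff.not.2 hxy.symm)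
  exact ⟨z, hz, haz⟩

end Contraction

namespace GVertex

variable {m n : ℕ} {S : Fin n → Set (Fin m)}

abbrev elt (i : Fin m) : GVertex S := ⟨.elt i, trivial⟩
abbrev hyp (j : Fin n) : GVertex S := ⟨.hyp j, trivial⟩
abbrev copy (k : Fin n) : GVertex S := ⟨.copy k, trivial⟩
abbrev sub (i : Fin m) (j : Fin n) (h : i ∈ S j) : GVertex S := ⟨.sub i j, h⟩
abbrev qstar : GVertex S := ⟨.qstar, trivial⟩
abbrev u1 : GVertex S := ⟨.u1, trivial⟩
abbrev u2 : GVertex S := ⟨.u2, trivial⟩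
abbrev v : GVertex S := ⟨.v, trivial⟩
abbrev w : GVertex S := ⟨.w, trivial⟩

theorem ext_iff {x y : GVertex S} : x = y ↔ x.1 = y.1 := Subtype.ext_iff

end GVertex

namespace GQS

variable {m n : ℕ} {S : Fin n → Set (Fin m)}

theorem adj_iff {x y : GVertex S} :
    (GQS S).Adj x y ↔ baseAdj S x.1 y.1 ∨ baseAdj S y.1 x.1 := by
  have hne : ∀ {a b : HVertex m n}, baseAdj S a b → a ≠ b := fun {a b} h => by
    cases a <;> cases b <;> simp_all [baseAdj]
  rw [GQS, fromRel_adj]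
  exact ⟨And.right, fun h => ⟨fun he => h.elim (hne · (congrArg _ he))
    (hne · (congrArg _ he.symm)), h⟩⟩

theorem adj_of_baseAdj {x y : GVertex S} (h : baseAdj S x.1 y.1) : (GQS S).Adj x y :=
  adj_iff.2 (.inl h)

theorem reachable_induce_of_baseAdj (s : Set (GVertex S)) (x y : GVertex S) (hx : x ∈ s)
    (hy : y ∈ s) (h : baseAdj S x.1 y.1) : ((GQS S).induce s).Reachable ⟨x, hx⟩ ⟨y, hy⟩ :=
  Adj.reachable (adj_of_baseAdj h)

theorem le_add_one_of_baseAdj {F : GVertex S → ℕ}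
    (hF : ∀ x y, (GQS S).Adj x y → F x ≤ F y + 1) (x y : GVertex S) (h : baseAdj S x.1 y.1) :
    F x ≤ F y + 1 ∧ F y ≤ F x + 1 :=
  ⟨hF x y (adj_of_baseAdj h), hF y x (adj_of_baseAdj h).symm⟩

theorem val_le_add_one_of_baseAdj {f : GVertex S → Fin 5}
    (hf : IsContractionMap (GQS S) (pathGraph 5) f) (x y : GVertex S) (h : baseAdj S x.1 y.1) :
    (f x : ℕ) ≤ f y + 1 ∧ (f y : ℕ) ≤ f x + 1 :=
  le_add_one_of_baseAdj (fun _ _ => hf.val_le_add_one) x y h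

theorem adj_u1_cases {z : GVertex S} (h : (GQS S).Adj .u1 z) :
    z = .qstar ∨ z = .v ∨ ∃ j, z = .hyp j := by
  replace h := adj_iff.1 h
  simp only [GVertex.ext_iff]
  obtain ⟨z, hz⟩ := z
  cases z <;> simp_all [baseAdj]

theorem adj_sub_cases {i : Fin m} {j : Fin n} {h : i ∈ S j} {z : GVertex S}
    (hz : (GQS S).Adj (.sub i j h) z) : z = .elt i ∨ z = .hyp j ∨ z = .qstar := by
  replace hz := adj_iff.1 hz
  simp only [GVertex.ext_iff]
  obtain ⟨z, hz'⟩ := z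
  cases z <;> simp_all [baseAdj, eq_comm]

theorem adj_hyp_cases {j : Fin n} {z : GVertex S} (h : (GQS S).Adj (.hyp j) z) :
    (∃ i h, z = .sub i j h) ∨ z = .u1 ∨ z = .u2 ∨ ∃ k, z = .copy k := by
  replace h := adj_iff.1 h
  simp only [GVertex.ext_iff]
  obtain ⟨z, hz⟩ := z
  cases z <;> simp_all [baseAdj, eq_comm]
  exact hz

theorem adj_copy_cases {k : Fin n} {z : GVertex S} (h : (GQS S).Adj (.copy k) z) :
    (∃ i ∈ S k, z = .elt i) ∨ (∃ j, z = .hyp j) ∨ z = .w := by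
  replace h := adj_iff.1 h
  simp only [GVertex.ext_iff]
  obtain ⟨z, hz⟩ := z
  cases z <;> simp_all [baseAdj]

theorem adj_elt_cases {i : Fin m} {z : GVertex S} (h : (GQS S).Adj (.elt i) z) :
    (∃ j h, z = .sub i j h) ∨ ∃ k, i ∈ S k ∧ z = .copy k := by
  replace h := adj_iff.1 h
  simp only [GVertex.ext_iff]
  obtain ⟨z, hz⟩ := z
  cases z <;> simp_all [baseAdj, eq_comm]
  exact hz

section Forward

variable {Q₁ Q₂ : Set (Fin m)}

open Classical in
noncomputable def colouringBag (Q₁ : Set (Fin m)) (x : GVertex S) : Fin 5 :=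
  match x.1 with
  | .v => 0
  | .qstar | .u1 | .u2 => 1
  | .hyp _ | .sub _ _ => 2
  | .elt i => if i ∈ Q₁ then 2 else 3
  | .copy _ => 3
  | .w => 4

theorem colouringBag_eq_or_adj {x y : GVertex S} (h : baseAdj S x.1 y.1) :
    colouringBag Q₁ x = colouringBag Q₁ y ∨
      (pathGraph 5).Adj (colouringBag Q₁ x) (colouringBag Q₁ y) := by
  obtain ⟨x, hx⟩ := x
  obtain ⟨y, hy⟩ := y
  cases x <;> cases y <;> simp only [baseAdj] at h <;>
    simp [colouringBag, pathGraph_adj] <;> split_ifs <;> simp_all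

theorem colouringBag_elt_of_mem {i : Fin m} (hi : i ∈ Q₁) :
    colouringBag Q₁ (.elt i : GVertex S) = 2 := if_pos hi

theorem colouringBag_elt_of_not_mem {i : Fin m} (hi : i ∉ Q₁) :
    colouringBag Q₁ (.elt i : GVertex S) = 3 := if_neg hi

theorem reachable_colouringBag_two {l : Fin n} (hl : S l = Set.univ)
    (hmeet : ∀ j, (Q₁ ∩ S j).Nonempty) (x : GVertex S) (hx : colouringBag Q₁ x = 2) :
    ((GQS S).induce (colouringBag Q₁ ⁻¹' {2})).Reachable ⟨.hyp l, rfl⟩ ⟨x, hx⟩ := by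
  have step := reachable_induce_of_baseAdj (S := S) (colouringBag Q₁ ⁻¹' {2})
  have helt : ∀ i (hi : i ∈ Q₁),
      ((GQS S).induce (colouringBag Q₁ ⁻¹' {2})).Reachable ⟨.hyp l, rfl⟩
        ⟨.elt i, colouringBag_elt_of_mem hi⟩ := fun i hi =>
    (step (.sub i l (Set.eq_univ_iff_forall.1 hl i)) (.hyp l) rfl rfl rfl).symm.trans
      (step _ (.elt i) rfl (colouringBag_elt_of_mem hi) rfl)
  have hhyp : ∀ j,
      ((GQS S).induce (colouringBag Q₁ ⁻¹' {2})).Reachable ⟨.hyp l, rfl⟩ ⟨.hyp j, rfl⟩ := by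
    intro j
    obtain ⟨i, hiQ, hiS⟩ := hmeet j
    exact ((helt i hiQ).trans (step (.sub i j hiS) (.elt i)
      rfl (colouringBag_elt_of_mem hiQ) rfl).symm).trans
        (step _ (.hyp j) rfl rfl rfl)
  obtain ⟨x, hxS⟩ := x
  cases x <;> simp [colouringBag] at hx
  · exact helt _ hx
  · exact hhyp _
  · exact (hhyp _).trans (step (.sub _ _ hxS) (.hyp _) rfl rfl rfl).symm

theorem reachable_colouringBag_three {l : Fin n} (hl : S l = Set.univ) (hdisj : Disjoint Q₁ Q₂)
    (hmeet : ∀ j, (Q₂ ∩ S j).Nonempty) (x : GVertex S) (hx : colouringBag Q₁ x = 3) :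
    ((GQS S).induce (colouringBag Q₁ ⁻¹' {3})).Reachable ⟨.copy l, rfl⟩ ⟨x, hx⟩ := by
  have step := reachable_induce_of_baseAdj (S := S) (colouringBag Q₁ ⁻¹' {3})
  have helt : ∀ i (hi : i ∉ Q₁),
      ((GQS S).induce (colouringBag Q₁ ⁻¹' {3})).Reachable ⟨.copy l, rfl⟩
        ⟨.elt i, colouringBag_elt_of_not_mem hi⟩ := fun i hi =>
    (step (.elt i) (.copy l) _ rfl (Set.eq_univ_iff_forall.1 hl i)).symm
  obtain ⟨x, hxS⟩ := x
  cases x <;> simp [colouringBag] at hx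
  · exact helt _ hx
  · obtain ⟨i, hiQ, hiS⟩ := hmeet _
    have hi : i ∉ Q₁ := Set.disjoint_right.1 hdisj hiQ
    exact (helt i hi).trans (step (.elt i) (.copy _)
      (colouringBag_elt_of_not_mem hi) rfl hiS)

theorem connected_colouringBag_fiber {l : Fin n} (hl : S l = Set.univ)
    (hcol : IsTwoColouring S Q₁ Q₂) (k : Fin 5) :
    ((GQS S).induce (colouringBag Q₁ ⁻¹' {k})).Connected := by
  obtain ⟨-, hdisj, hmeet⟩ := hcol
  rw [connected_iff_exists_forall_reachable]
  obtain rfl | rfl | rfl | rfl | rfl : k = 0 ∨ k = 1 ∨ k = 2 ∨ k = 3 ∨ k = 4 := by omega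
  · refine ⟨⟨.v, rfl⟩, fun ⟨⟨x, hxS⟩, hx⟩ => ?_⟩
    change colouringBag Q₁ ⟨x, hxS⟩ = _ at hx
    cases x <;> simp [colouringBag, ite_eq_iff] at hx
    rfl
  · refine ⟨⟨.qstar, rfl⟩, fun ⟨⟨x, hxS⟩, hx⟩ => ?_⟩
    change colouringBag Q₁ ⟨x, hxS⟩ = _ at hx
    cases x <;> simp [colouringBag, ite_eq_iff] at hx
    · rfl
    · exact reachable_induce_of_baseAdj (colouringBag Q₁ ⁻¹' {1}) .qstar .u1 rfl rfl trivial
    · exact reachable_induce_of_baseAdj (colouringBag Q₁ ⁻¹' {1}) .qstar .u2 rfl rfl trivial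
  · exact ⟨_, fun ⟨x, hx⟩ => reachable_colouringBag_two hl (fun j => (hmeet j).1) x hx⟩
  · exact ⟨_, fun ⟨x, hx⟩ => reachable_colouringBag_three hl hdisj (fun j => (hmeet j).2) x hx⟩
  · refine ⟨⟨.w, rfl⟩, fun ⟨⟨x, hxS⟩, hx⟩ => ?_⟩
    change colouringBag Q₁ ⟨x, hxS⟩ = _ at hx
    cases x <;> simp [colouringBag, ite_eq_iff] at hx
    rfl

theorem isContractionMap_colouringBag {l : Fin n} (hl : S l = Set.univ)
    (hcol : IsTwoColouring S Q₁ Q₂) :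
    IsContractionMap (GQS S) (pathGraph 5) (colouringBag Q₁) := by
  refine ⟨fun k => ?_, connected_colouringBag_fiber hl hcol, fun k₁ k₂ hk => ⟨?_, fun hadj => ?_⟩⟩
  · obtain rfl | rfl | rfl | rfl | rfl : k = 0 ∨ k = 1 ∨ k = 2 ∨ k = 3 ∨ k = 4 := by omega
    exacts [⟨.v, rfl⟩, ⟨.qstar, rfl⟩, ⟨.hyp l, rfl⟩, ⟨.copy l, rfl⟩, ⟨.w, rfl⟩]
  · rintro ⟨x, y, rfl, rfl, hxy⟩
    rcases adj_iff.1 hxy with h | h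
    · exact (colouringBag_eq_or_adj h).resolve_left hk
    · exact ((colouringBag_eq_or_adj h).resolve_left (Ne.symm hk)).symm
  · have hsucc : ∀ k k' : Fin 5, (k : ℕ) + 1 = k' →
        ∃ a b, colouringBag Q₁ a = k ∧ colouringBag Q₁ b = k' ∧ (GQS S).Adj a b := by
      intro k k' h
      obtain ⟨rfl, rfl⟩ | ⟨rfl, rfl⟩ | ⟨rfl, rfl⟩ | ⟨rfl, rfl⟩ :
          k = 0 ∧ k' = 1 ∨ k = 1 ∧ k' = 2 ∨ k = 2 ∧ k' = 3 ∨ k = 3 ∧ k' = 4 := by omega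
      exacts [⟨.v, .u1, rfl, rfl, (adj_of_baseAdj (x := .u1) (y := .v) trivial).symm⟩,
        ⟨.u1, .hyp l, rfl, rfl, adj_of_baseAdj trivial⟩,
        ⟨.hyp l, .copy l, rfl, rfl, adj_of_baseAdj trivial⟩,
        ⟨.copy l, .w, rfl, rfl, (adj_of_baseAdj (x := .w) (y := .copy l) trivial).symm⟩]
    rcases pathGraph_adj.1 hadj with h | h
    · exact hsucc _ _ h
    · obtain ⟨a, b, ha, hb, hab⟩ := hsucc _ _ h
      exact ⟨b, a, hb, ha, hab.symm⟩

end Forward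

section Backward

/-- One disjunct for each kind of vertex `a` (in order `v`, `q*`, `w`, `q_i`, `q^i_j`, `S_k'`,
`S_j`, and `u₁` or `u₂`): upper bounds on `F` along the path `q* – u₁ – S_l – S_l' – w`. -/
theorem landmark_bounds_of_eq_zero {F : GVertex S → ℕ}
    (hF : ∀ x y, (GQS S).Adj x y → F x ≤ F y + 1) {l : Fin n} (hl : S l = Set.univ)
    {a : GVertex S} (ha : F a = 0) :
    F .v = 0 ∧ F .u1 ≤ 1 ∨ F .qstar = 0 ∨ F .w = 0 ∨
    (∃ i, F (.elt i) = 0) ∧ F (.copy l) ≤ 1 ∧ F .qstar ≤ 2 ∨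
    (∃ j, F (.hyp j) ≤ 1) ∧ F .qstar ≤ 1 ∧ F (.copy l) ≤ 2 ∨
    (∀ j, F (.hyp j) ≤ 1) ∧ F .w ≤ 1 ∨
    F .u1 ≤ 1 ∧ F (.copy l) ≤ 1 ∨
    F (.hyp l) ≤ 1 ∧ F .qstar ≤ 1 := by
  have e := le_add_one_of_baseAdj hF
  have hSl := Set.eq_univ_iff_forall.1 hl
  obtain ⟨a, haS⟩ := a
  cases a with
  | v =>
    change F .v = 0 at ha
    have := e .u1 .v trivial
    omega
  | qstar => exact .inr (.inl ha)
  | w => exact .inr (.inr (.inl ha))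
  | u1 =>
    change F .u1 = 0 at ha
    have := e .u1 (.hyp l) trivial
    have := e .qstar .u1 trivial
    omega
  | u2 =>
    change F .u2 = 0 at ha
    have := e .u2 (.hyp l) trivial
    have := e .qstar .u2 trivial
    omega
  | hyp j =>
    change F (.hyp j) = 0 at ha
    have := e .u1 (.hyp j) trivial
    have := e (.hyp j) (.copy l) trivial
    omega
  | elt i =>
    change F (.elt i) = 0 at ha
    have := e (.elt i) (.copy l) (hSl i)
    have := e (.sub i l (hSl i)) (.elt i) rfl
    have := e .qstar (.sub i l (hSl i)) trivial
    grind
  | sub i j =>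
    have := e .qstar (.sub i j haS) trivial
    have := e (.sub i j haS) (.hyp j) rfl
    have := e (.hyp j) (.copy l) trivial
    grind
  | copy k =>
    change F (.copy k) = 0 at ha
    have hhyp : ∀ j, F (.hyp j) ≤ 1 := fun j => by
      have := e (.hyp j) (.copy k) trivial
      omega
    have := e .w (.copy k) trivial
    grind

/-- Apply `landmark_bounds_of_eq_zero` to a vertex of value 0 for `F` and for `4 - F`: all pairs
of disjuncts except the six listed ones contradict the path `q* – u₁ – S_l – S_l' – w`. -/
theorem ends_cases_of_le_add_one {F : GVertex S → ℕ}
    (hF : ∀ x y, (GQS S).Adj x y → F x ≤ F y + 1) (hF4 : ∀ x, F x ≤ 4) {l : Fin n}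
    (hl : S l = Set.univ) {a b : GVertex S} (ha : F a = 0) (hb : F b = 4) :
    (F .v = 0 ∧ (F .w = 4 ∨ ∃ i, F (.elt i) = 4) ∨ F .qstar = 0 ∧ F .w = 4) ∨
    (F .v = 4 ∧ (F .w = 0 ∨ ∃ i, F (.elt i) = 0) ∨ F .qstar = 4 ∧ F .w = 0) := by
  have hF' : ∀ x y, (GQS S).Adj x y → 4 - F x ≤ 4 - F y + 1 := fun x y h => by
    have := hF y x h.symm
    omega
  have e := le_add_one_of_baseAdj hF
  have := e .qstar .u1 trivial
  have := e .u1 (.hyp l) trivial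
  have := e (.hyp l) (.copy l) trivial
  have := e .w (.copy l) trivial
  rcases landmark_bounds_of_eq_zero hF hl ha with h | h | h | h | h | h | h | h <;>
  rcases landmark_bounds_of_eq_zero hF' hl (a := b) (by omega) with
    h' | h' | h' | h' | h' | h' | h' | h' <;>
  grind

variable {f : GVertex S → Fin 5}

theorem hyp_eq_two (hf : IsContractionMap (GQS S) (pathGraph 5) f) {l : Fin n}
    (hc : 3 ≤ f (.copy l)) (hu : f .u1 ≤ 1) (j : Fin n) : f (.hyp j) = 2 := by
  have e := val_le_add_one_of_baseAdj hf
  have := e .u1 (.hyp j) trivial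
  have := e (.hyp j) (.copy l) trivial
  omega

theorem qstar_eq_one (hf : IsContractionMap (GQS S) (pathGraph 5) f) (hu₁ : f .u1 = 1)
    (hu₂ : f .u2 = 1) (hv : f .v ≠ 1) (hhyp : ∀ j, f (.hyp j) ≠ 1) : f .qstar = 1 := by
  obtain ⟨z, hz, hadj⟩ := exists_adj_of_connected_induce_of_ne (hf.connected_fiber 1) hu₁ hu₂
    (by simp [GVertex.ext_iff])
  rcases adj_u1_cases hadj with rfl | rfl | ⟨j, rfl⟩
  · exact hz
  · exact absurd hz hv
  · exact absurd hz (hhyp j)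

theorem elt_ne_four_of_w_eq_four (hf : IsContractionMap (GQS S) (pathGraph 5) f) (hw : f .w = 4)
    (hq : f .qstar = 1) (hcopy : ∀ k, f (.copy k) = 3) (i : Fin m) : f (.elt i) ≠ 4 := by
  intro hi
  obtain ⟨z, hz, hadj⟩ := exists_adj_of_connected_induce_of_ne (hf.connected_fiber 4) hi hw
    (by simp [GVertex.ext_iff])
  rcases adj_elt_cases hadj with ⟨j, h, rfl⟩ | ⟨k, -, rfl⟩
  · have hz : f (.sub i j h) = 4 := hz
    have := val_le_add_one_of_baseAdj hf .qstar (.sub i j h) trivial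
    omega
  · exact absurd hz (by simp [hcopy k])

theorem exists_elt_eq_two (hf : IsContractionMap (GQS S) (pathGraph 5) f) {j j' : Fin n}
    (hj : j ≠ j') (hhyp : ∀ j, f (.hyp j) = 2) (hu₁ : f .u1 = 1) (hu₂ : f .u2 = 1)
    (hq : f .qstar = 1) (hcopy : ∀ k, f (.copy k) = 3) : ∃ i ∈ S j, f (.elt i) = 2 := by
  obtain ⟨a, -, b, hb, hat, hbt, hab⟩ := exists_adj_of_connected_induce
    (t := {x | x = .hyp j ∨ ∃ i h, x = .sub i j h}) (hf.connected_fiber 2) (hhyp j) (hhyp j')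
    (.inl rfl) (by simp [GVertex.ext_iff, hj.symm])
  have hb : f b = 2 := hb
  rcases hat with rfl | ⟨i, h, rfl⟩
  · rcases adj_hyp_cases hab with ⟨i, h, rfl⟩ | rfl | rfl | ⟨k, rfl⟩
    · exact absurd (.inr ⟨i, h, rfl⟩) hbt
    all_goals simp_all
  · rcases adj_sub_cases hab with rfl | rfl | rfl
    · exact ⟨i, h, hb⟩
    · exact absurd (.inl rfl) hbt
    · simp_all

theorem exists_elt_eq_three (hf : IsContractionMap (GQS S) (pathGraph 5) f) {j j' : Fin n}
    (hj : j ≠ j') (hcopy : ∀ k, f (.copy k) = 3) (hhyp : ∀ j, f (.hyp j) = 2) (hw : f .w = 4) :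
    ∃ i ∈ S j, f (.elt i) = 3 := by
  obtain ⟨z, hz, hadj⟩ := exists_adj_of_connected_induce_of_ne (hf.connected_fiber 3) (hcopy j)
    (hcopy j') (by simp [GVertex.ext_iff, hj])
  have hz : f z = 3 := hz
  rcases adj_copy_cases hadj with ⟨i, hi, rfl⟩ | ⟨j, rfl⟩ | rfl
  · exact ⟨i, hi, hz⟩
  all_goals simp_all

theorem values_of_v_eq_zero (hf : IsContractionMap (GQS S) (pathGraph 5) f) {l : Fin n}
    (hv : f .v = 0) (hc : 3 ≤ f (.copy l)) :
    f .u1 = 1 ∧ f .u2 = 1 ∧ f .qstar = 1 ∧ ∀ j, f (.hyp j) = 2 := by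
  have e := val_le_add_one_of_baseAdj hf
  have := e .u1 .v trivial
  have := e .u2 .v trivial
  have hhyp := hyp_eq_two hf hc (by omega)
  have := hhyp l
  have := e .u1 (.hyp l) trivial
  have := e .u2 (.hyp l) trivial
  have hu₁ : f .u1 = 1 := by omega
  have hu₂ : f .u2 = 1 := by omega
  exact ⟨hu₁, hu₂, qstar_eq_one hf hu₁ hu₂ (by omega) (by simp [hhyp]), hhyp⟩

theorem exists_twoColouring_of_v_eq_zero_of_w_eq_four
    (hf : IsContractionMap (GQS S) (pathGraph 5) f) (hn : 2 ≤ n) {l : Fin n}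
    (hl : S l = Set.univ) (hv : f .v = 0) (hw : f .w = 4) :
    ∃ Q₁ Q₂, IsTwoColouring S Q₁ Q₂ := by
  have e := val_le_add_one_of_baseAdj hf
  have := e .w (.copy l) trivial
  obtain ⟨hu₁, hu₂, hq, hhyp⟩ := values_of_v_eq_zero hf hv (l := l) (by omega)
  have hcopy : ∀ k, f (.copy k) = 3 := fun k => by
    have := e .w (.copy k) trivial
    have := e (.hyp l) (.copy k) trivial
    have := hhyp l
    omega
  have helt : ∀ i, f (.elt i) = 2 ∨ f (.elt i) = 3 := fun i => by
    have := e (.elt i) (.copy l) (Set.eq_univ_iff_forall.1 hl i)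
    have := elt_ne_four_of_w_eq_four hf hw hq hcopy i
    have := hcopy l
    omega
  have := Fin.nontrivial_iff_two_le.2 hn
  refine ⟨{i | f (.elt i) = 2}, {i | f (.elt i) = 3}, ?_, ?_, fun j => ?_⟩
  · exact Set.eq_univ_of_forall helt
  · exact Set.disjoint_left.2 fun i (h₂ : _ = 2) (h₃ : _ = 3) => by simp [h₂] at h₃
  · obtain ⟨j', hj'⟩ := exists_ne j
    obtain ⟨i, hiS, hi⟩ := exists_elt_eq_two hf hj'.symm hhyp hu₁ hu₂ hq hcopy
    obtain ⟨i', hiS', hi'⟩ := exists_elt_eq_three hf hj'.symm hcopy hhyp hw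
    exact ⟨⟨i, hi, hiS⟩, ⟨i', hi', hiS'⟩⟩

theorem w_ne_four_of_qstar_eq_zero (hf : IsContractionMap (GQS S) (pathGraph 5) f) {l : Fin n}
    (hl : S l = Set.univ) (i : Fin m) (hq : f .qstar = 0) : f .w ≠ 4 := by
  intro hw
  have e := val_le_add_one_of_baseAdj hf
  have hil : i ∈ S l := Set.eq_univ_iff_forall.1 hl i
  have := e .qstar .u1 trivial
  have := e .w (.copy l) trivial
  have := e .u1 (.hyp l) trivial
  have := hyp_eq_two hf (l := l) (by omega) (by omega) l
  have := e .qstar (.sub i l hil) trivial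
  have := e (.sub i l hil) (.hyp l) rfl
  have := e (.elt i) (.copy l) hil
  -- `q^i_l` is forced into bag 1, which also contains `u₁` but none of the neighbours of `q^i_l`.
  have hs : f (.sub i l hil) = 1 := by omega
  obtain ⟨z, hz, hadj⟩ := exists_adj_of_connected_induce_of_ne (hf.connected_fiber 1) hs
    (show f .u1 = 1 by omega) (by simp [GVertex.ext_iff])
  have hz : f z = 1 := hz
  rcases adj_sub_cases hadj with rfl | rfl | rfl <;> omega

theorem elt_ne_four_of_v_eq_zero (hf : IsContractionMap (GQS S) (pathGraph 5) f) {l : Fin n}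
    (hl : S l = Set.univ) (i : Fin m) (hv : f .v = 0) : f (.elt i) ≠ 4 := by
  intro hi
  have e := val_le_add_one_of_baseAdj hf
  have hil : i ∈ S l := Set.eq_univ_iff_forall.1 hl i
  have := e (.elt i) (.copy l) hil
  obtain ⟨-, -, hq, -⟩ := values_of_v_eq_zero hf hv (l := l) (by omega)
  have := e .qstar (.sub i l hil) trivial
  have := e (.sub i l hil) (.elt i) rfl
  omega

theorem exists_isContractionMap_ends (hf : IsContractionMap (GQS S) (pathGraph 5) f)
    {l : Fin n} (hl : S l = Set.univ) :
    ∃ g, IsContractionMap (GQS S) (pathGraph 5) g ∧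
      (g .v = 0 ∧ (g .w = 4 ∨ ∃ i, g (.elt i) = 4) ∨ g .qstar = 0 ∧ g .w = 4) := by
  obtain ⟨a, ha⟩ := hf.surjective 0
  obtain ⟨b, hb⟩ := hf.surjective 4
  rcases ends_cases_of_le_add_one (F := fun x => (f x : ℕ)) (fun _ _ => hf.val_le_add_one)
    (fun x => by omega) hl (a := a) (b := b) (by simp [ha]) (by simp [hb]) with h | h
  · exact ⟨f, hf, by grind⟩
  · refine ⟨_, hf.comp_iso (pathGraphRevIso 5), ?_⟩
    simp only [Function.comp_apply, pathGraphRevIso_apply, Fin.ext_iff, Fin.val_rev]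
    grind

theorem exists_twoColouring_of_isContractionMap (hn : 2 ≤ n) (hS : ∀ j, (S j).Nonempty)
    {l : Fin n} (hl : S l = Set.univ) (hf : IsContractionMap (GQS S) (pathGraph 5) f) :
    ∃ Q₁ Q₂, IsTwoColouring S Q₁ Q₂ := by
  obtain ⟨g, hg, ⟨hv, hw | ⟨i, hi⟩⟩ | ⟨hq, hw⟩⟩ := exists_isContractionMap_ends hf hl
  · exact exists_twoColouring_of_v_eq_zero_of_w_eq_four hg hn hl hv hw
  · exact absurd hi (elt_ne_four_of_v_eq_zero hg hl i hv)
  · exact absurd hw (w_ne_four_of_qstar_eq_zero hg hl (hS l).some hq)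

end Backward

end GQS

open GQS in
theorem stmt_14 {m n : ℕ} (S : Fin n → Set (Fin m)) (hn : 2 ≤ n)
    (hSne : ∀ j, (S j).Nonempty) (hSlast : S ⟨n - 1, by omega⟩ = Set.univ) :
    (∃ Q₁ Q₂ : Set (Fin m), IsTwoColouring S Q₁ Q₂) ↔
      ContainsAsContraction (GQS S) (SimpleGraph.pathGraph 5) := by
  rw [containsAsContraction_iff_exists_isContractionMap]
  constructor
  · rintro ⟨Q₁, Q₂, hcol⟩
    exact ⟨_, isContractionMap_colouringBag hSlast hcol⟩
  · rintro ⟨f, hf⟩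
    exact exists_twoColouring_of_isContractionMap hn hSne hSlast hf
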